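/- Let d, N ≥ 1, C_φ ∈ (0,4), C_{φ'} > 0, and let φ : ℝ → ℝ be differentiable with |φ| ≤ C_φ and |φ'| ≤ C_{φ'}. Fix A ∈ ℝ^{N×d}, W ∈ ℝ^{N×N}, a sequence (X_t) in ℝ^d with ‖X_t‖_max ≤ 1, a sequence (S_t) in ℝ^N with ‖S_t‖_max ≤ 1, and indices n ∈ {1,…,N}, m ∈ {1,…,N}, i ∈ {1,…,N}, j ∈ {1,…,d}. Write z_t^k = (1/d)∑_ℓ φ(A^{kℓ})X_t^ℓ + (1/N)∑_ℓ φ(W^{kℓ})S_t^ℓ. Suppose max_k |S̃_t^{W^{nm},k}| ≤ C_{φ'}/((4−C_φ)N) and max_k |S̃_t^{A^{ij},k}| ≤ C_{φ'}/((4−C_φ)d) for all t, and that (S̃̃_t^{W^{nm},A^{ij},k})_{t≥0} satisfies S̃̃_{t+1}^{W^{nm},A^{ij},k} = σ''(z_t^k)·((δ_{kn}/N)φ'(W^{nm})S_t^m + (1/N)∑_ℓ φ(W^{kℓ})S̃_t^{W^{nm},ℓ})·((δ_{ik}/d)φ'(A^{ij})X_t^j + (1/N)∑_ℓ φ(W^{kℓ})S̃_t^{A^{ij},ℓ})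 + σ'(z_t^k)·((δ_{kn}/N)φ'(W^{nm})S̃_t^{A^{ij},m} + (1/N)∑_ℓ φ(W^{kℓ})S̃̃_t^{W^{nm},A^{ij},ℓ}). If max_k |S̃̃_0^{W^{nm},A^{ij},k}| ≤ a_{WA,max}/(1−C_φ/4), where a_{WA,max} = C_{φ'}² M_φ²/(10 N d) + C_{φ'}²/(4 N d (4−C_φ)) and M_φ = 1 + C_φ/(4−C_φ), then max_k |S̃̃_t^{W^{nm},A^{ij},k}| ≤ a_{WA,max}/(1−C_φ/4) for all t ≥ 0. In particular this holds when S̃̃_0 = 0. -/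

import Mathlib

open Finset

noncomputable def sigmoid (y : ℝ) : ℝ := 1 / (1 + Real.exp (-y))

lemma one_add_exp_pos (y : ℝ) : (0:ℝ) < 1 + Real.exp (-y) := by positivity

lemma sigmoid_pos (y : ℝ) : 0 < sigmoid y := by unfold sigmoid; positivity

lemma sigmoid_lt_one (y : ℝ) : sigmoid y < 1 := by
  unfold sigmoid
  rw [div_lt_one (one_add_exp_pos y)]
  linarith [Real.exp_pos (-y)]

lemma sigmoid_hasDerivAt (y : ℝ) :
    HasDerivAt sigmoid (sigmoid y * (1 - sigmoid y)) y := by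
  have h1 : HasDerivAt (fun y : ℝ => 1 + Real.exp (-y)) (-Real.exp (-y)) y := by
    have := (Real.hasDerivAt_exp (-y)).comp y (hasDerivAt_neg y)
    simpa using this.const_add 1
  have h2 := h1.inv (ne_of_gt (one_add_exp_pos y))
  have h3 : HasDerivAt (fun y : ℝ => (1 + Real.exp (-y))⁻¹)
      (Real.exp (-y) / (1 + Real.exp (-y)) ^ 2) y := by
    exact h2.congr_deriv (by ring)
  have h4 : sigmoid = fun y : ℝ => (1 + Real.exp (-y))⁻¹ := by
    funext y; simp [sigmoid, one_div]
  rw [h4]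
  convert h3 using 1
  simp only [sigmoid]
  have := (one_add_exp_pos y).ne'
  field_simp
  ring

lemma deriv_sigmoid (y : ℝ) : deriv sigmoid y = sigmoid y * (1 - sigmoid y) :=
  (sigmoid_hasDerivAt y).deriv

lemma deriv2_sigmoid (y : ℝ) :
    deriv (deriv sigmoid) y = sigmoid y * (1 - sigmoid y) * (1 - 2 * sigmoid y) := by
  have h : deriv sigmoid = fun y => sigmoid y * (1 - sigmoid y) := funext deriv_sigmoid
  rw [h]
  have h1 : HasDerivAt (fun y => sigmoid y * (1 - sigmoid y))
      (sigmoid y * (1 - sigmoid y) * (1 - sigmoid y) +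
        sigmoid y * (-(sigmoid y * (1 - sigmoid y)))) y :=
    (sigmoid_hasDerivAt y).mul ((sigmoid_hasDerivAt y).const_sub 1)
  rw [h1.deriv]; ring

lemma abs_deriv_sigmoid (y : ℝ) : |deriv sigmoid y| ≤ 1 / 4 := by
  rw [deriv_sigmoid]
  have h1 := sigmoid_pos y
  have h2 := sigmoid_lt_one y
  rw [abs_le]
  constructor <;> nlinarith [sq_nonneg (sigmoid y - 1/2)]

lemma abs_deriv2_sigmoid (y : ℝ) : |deriv (deriv sigmoid) y| ≤ 1 / 10 := by
  rw [deriv2_sigmoid]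
  have h1 := sigmoid_pos y
  have h2 := sigmoid_lt_one y
  set s := sigmoid y with hs
  rw [abs_le]
  constructor
  · nlinarith [mul_nonneg h1.le (sq_nonneg (s - 79/100)), sq_nonneg (s - 1241/1600)]
  · nlinarith [mul_nonneg (by linarith : (0:ℝ) ≤ 1 - s) (sq_nonneg (s - 21/100)),
      sq_nonneg (s - 359/1600)]

lemma abs_sum_mul_le {N : ℕ} (f g : Fin N → ℝ) (C b : ℝ) (hC : 0 ≤ C) (hb : 0 ≤ b)
    (hf : ∀ ℓ, |f ℓ| ≤ C) (hg : ∀ ℓ, |g ℓ| ≤ b) :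
    |∑ ℓ, f ℓ * g ℓ| ≤ N * (C * b) := by
  calc |∑ ℓ, f ℓ * g ℓ| ≤ ∑ ℓ, |f ℓ * g ℓ| := Finset.abs_sum_le_sum_abs _ _
    _ ≤ ∑ _ℓ : Fin N, C * b := Finset.sum_le_sum (fun ℓ _ => by
        rw [abs_mul]; exact mul_le_mul (hf ℓ) (hg ℓ) (abs_nonneg _) hC)
    _ = N * (C * b) := by
        simp [Finset.sum_const, Finset.card_univ]

theorem second_derivative_WA_bound
    (d N : ℕ) (hd : 1 ≤ d) (hN : 1 ≤ N)
    (Cφ Cφ' : ℝ) (hCφ0 : 0 < Cφ) (hCφ4 : Cφ < 4) (hCφ' : 0 < Cφ')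
    (φ : ℝ → ℝ) (hφdiff : Differentiable ℝ φ)
    (hφ : ∀ y, |φ y| ≤ Cφ) (hφ' : ∀ y, |deriv φ y| ≤ Cφ')
    (A : Fin N → Fin d → ℝ) (W : Fin N → Fin N → ℝ)
    (X : ℕ → Fin d → ℝ) (hX : ∀ t, ‖X t‖ ≤ 1)
    (S : ℕ → Fin N → ℝ) (hS : ∀ t, ‖S t‖ ≤ 1)
    (n m i : Fin N) (j : Fin d)
    (tSW tSA : ℕ → Fin N → ℝ)
    (htSW : ∀ t k, |tSW t k| ≤ Cφ' / ((4 - Cφ) * N))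
    (htSA : ∀ t k, |tSA t k| ≤ Cφ' / ((4 - Cφ) * d))
    (tt : ℕ → Fin N → ℝ)
    (hrec : ∀ t k, tt (t + 1) k =
      deriv (deriv sigmoid) ((1 / (d : ℝ)) * ∑ ℓ, φ (A k ℓ) * X t ℓ
          + (1 / (N : ℝ)) * ∑ ℓ, φ (W k ℓ) * S t ℓ)
        * ((if k = n then (1 : ℝ) else 0) / (N : ℝ) * deriv φ (W n m) * S t m
            + (1 / (N : ℝ)) * ∑ ℓ, φ (W k ℓ) * tSW t ℓ)
        * ((if i = k then (1 : ℝ) else 0) / (d : ℝ) * deriv φ (A i j) * X t j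
            + (1 / (N : ℝ)) * ∑ ℓ, φ (W k ℓ) * tSA t ℓ)
      + deriv sigmoid ((1 / (d : ℝ)) * ∑ ℓ, φ (A k ℓ) * X t ℓ
          + (1 / (N : ℝ)) * ∑ ℓ, φ (W k ℓ) * S t ℓ)
        * ((if k = n then (1 : ℝ) else 0) / (N : ℝ) * deriv φ (W n m) * tSA t m
            + (1 / (N : ℝ)) * ∑ ℓ, φ (W k ℓ) * tt t ℓ))
    (Mφ aWA : ℝ)
    (hMφ : Mφ = 1 + Cφ / (4 - Cφ))
    (haWA : aWA = Cφ' ^ 2 * Mφ ^ 2 / (10 * (N : ℝ) * (d : ℝ))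
        + Cφ' ^ 2 / (4 * (N : ℝ) * (d : ℝ) * (4 - Cφ)))
    (h0 : ∀ k, |tt 0 k| ≤ aWA / (1 - Cφ / 4)) :
    ∀ t k, |tt t k| ≤ aWA / (1 - Cφ / 4) := by
  have h4 : (0:ℝ) < 4 - Cφ := by linarith
  have hN0 : (0:ℝ) < N := by exact_mod_cast hN
  have hd0 : (0:ℝ) < d := by exact_mod_cast hd
  have hMpos : 0 < Mφ := by rw [hMφ]; positivity
  have h14 : (0:ℝ) < 1 - Cφ / 4 := by linarith
  set B : ℝ := aWA / (1 - Cφ / 4) with hB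
  have haWApos : 0 < aWA := by rw [haWA]; positivity
  have hBpos : 0 < B := by rw [hB]; positivity
  intro t
  induction t with
  | zero => exact h0
  | succ t ih =>
    intro k
    rw [hrec t k]
    have hSm : |S t m| ≤ 1 := by
      have := norm_le_pi_norm (S t) m
      rw [Real.norm_eq_abs] at this
      exact this.trans (hS t)
    have hXj : |X t j| ≤ 1 := by
      have := norm_le_pi_norm (X t) j
      rw [Real.norm_eq_abs] at this
      exact this.trans (hX t)
    have hifn : |(if k = n then (1:ℝ) else 0) / (N:ℝ)| ≤ 1 / N := by
      split
      · exact le_of_eq (abs_of_nonneg (by positivity))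
      · simpa using le_of_lt (by positivity : (0:ℝ) < 1 / (N:ℝ))
    have hifi : |(if i = k then (1:ℝ) else 0) / (d:ℝ)| ≤ 1 / d := by
      split
      · exact le_of_eq (abs_of_nonneg (by positivity))
      · simpa using le_of_lt (by positivity : (0:ℝ) < 1 / (d:ℝ))
    have hbSW : 0 ≤ Cφ' / ((4 - Cφ) * N) := by positivity
    have hbSA : 0 ≤ Cφ' / ((4 - Cφ) * d) := by positivity
    have hF1 : |(if k = n then (1:ℝ) else 0) / (N:ℝ) * deriv φ (W n m) * S t m
        + (1 / (N:ℝ)) * ∑ ℓ, φ (W k ℓ) * tSW t ℓ| ≤ Cφ' * Mφ / N := by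
      have h1 : |(if k = n then (1:ℝ) else 0) / (N:ℝ) * deriv φ (W n m) * S t m|
          ≤ 1 / N * Cφ' * 1 := by
        rw [abs_mul, abs_mul]
        exact mul_le_mul (mul_le_mul hifn (hφ' _) (abs_nonneg _) (by positivity))
          hSm (abs_nonneg _) (by positivity)
      have h2 : |(1 / (N:ℝ)) * ∑ ℓ, φ (W k ℓ) * tSW t ℓ|
          ≤ 1 / N * (N * (Cφ * (Cφ' / ((4 - Cφ) * N)))) := by
        rw [abs_mul, abs_of_nonneg (by positivity : (0:ℝ) ≤ 1 / (N:ℝ))]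
        exact mul_le_mul_of_nonneg_left
          (abs_sum_mul_le _ _ _ _ hCφ0.le hbSW (fun ℓ => hφ _) (fun ℓ => htSW t ℓ))
          (by positivity)
      calc _ ≤ _ + _ := abs_add_le _ _
        _ ≤ 1 / N * Cφ' * 1 + 1 / N * (N * (Cφ * (Cφ' / ((4 - Cφ) * N)))) :=
            add_le_add h1 h2
        _ = Cφ' * Mφ / N := by rw [hMφ]; field_simp
    have hF2 : |(if i = k then (1:ℝ) else 0) / (d:ℝ) * deriv φ (A i j) * X t j
        + (1 / (N:ℝ)) * ∑ ℓ, φ (W k ℓ) * tSA t ℓ| ≤ Cφ' * Mφ / d := by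
      have h1 : |(if i = k then (1:ℝ) else 0) / (d:ℝ) * deriv φ (A i j) * X t j|
          ≤ 1 / d * Cφ' * 1 := by
        rw [abs_mul, abs_mul]
        exact mul_le_mul (mul_le_mul hifi (hφ' _) (abs_nonneg _) (by positivity))
          hXj (abs_nonneg _) (by positivity)
      have h2 : |(1 / (N:ℝ)) * ∑ ℓ, φ (W k ℓ) * tSA t ℓ|
          ≤ 1 / N * (N * (Cφ * (Cφ' / ((4 - Cφ) * d)))) := by
        rw [abs_mul, abs_of_nonneg (by positivity : (0:ℝ) ≤ 1 / (N:ℝ))]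
        exact mul_le_mul_of_nonneg_left
          (abs_sum_mul_le _ _ _ _ hCφ0.le hbSA (fun ℓ => hφ _) (fun ℓ => htSA t ℓ))
          (by positivity)
      calc _ ≤ _ + _ := abs_add_le _ _
        _ ≤ 1 / d * Cφ' * 1 + 1 / N * (N * (Cφ * (Cφ' / ((4 - Cφ) * d)))) :=
            add_le_add h1 h2
        _ = Cφ' * Mφ / d := by rw [hMφ]; field_simp
    have hF3 : |(if k = n then (1:ℝ) else 0) / (N:ℝ) * deriv φ (W n m) * tSA t m
        + (1 / (N:ℝ)) * ∑ ℓ, φ (W k ℓ) * tt t ℓ|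
        ≤ Cφ' * (Cφ' / ((4 - Cφ) * d)) / N + Cφ * B := by
      have h1 : |(if k = n then (1:ℝ) else 0) / (N:ℝ) * deriv φ (W n m) * tSA t m|
          ≤ 1 / N * Cφ' * (Cφ' / ((4 - Cφ) * d)) := by
        rw [abs_mul, abs_mul]
        exact mul_le_mul (mul_le_mul hifn (hφ' _) (abs_nonneg _) (by positivity))
          (htSA t m) (abs_nonneg _) (by positivity)
      have h2 : |(1 / (N:ℝ)) * ∑ ℓ, φ (W k ℓ) * tt t ℓ|
          ≤ 1 / N * (N * (Cφ * B)) := by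
        rw [abs_mul, abs_of_nonneg (by positivity : (0:ℝ) ≤ 1 / (N:ℝ))]
        exact mul_le_mul_of_nonneg_left
          (abs_sum_mul_le _ _ _ _ hCφ0.le hBpos.le (fun ℓ => hφ _) (fun ℓ => ih ℓ))
          (by positivity)
      calc _ ≤ _ + _ := abs_add_le _ _
        _ ≤ 1 / N * Cφ' * (Cφ' / ((4 - Cφ) * d)) + 1 / N * (N * (Cφ * B)) :=
            add_le_add h1 h2
        _ = Cφ' * (Cφ' / ((4 - Cφ) * d)) / N + Cφ * B := by field_simp
    have hσ'' := abs_deriv2_sigmoid ((1 / (d : ℝ)) * ∑ ℓ, φ (A k ℓ) * X t ℓ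
          + (1 / (N : ℝ)) * ∑ ℓ, φ (W k ℓ) * S t ℓ)
    have hσ' := abs_deriv_sigmoid ((1 / (d : ℝ)) * ∑ ℓ, φ (A k ℓ) * X t ℓ
          + (1 / (N : ℝ)) * ∑ ℓ, φ (W k ℓ) * S t ℓ)
    have key : 1 / 10 * (Cφ' * Mφ / N) * (Cφ' * Mφ / d)
        + 1 / 4 * (Cφ' * (Cφ' / ((4 - Cφ) * d)) / N + Cφ * B) = B := by
      have hB2 : B = (Cφ' ^ 2 * Mφ ^ 2 / (10 * (N : ℝ) * (d : ℝ))
          + Cφ' ^ 2 / (4 * (N : ℝ) * (d : ℝ) * (4 - Cφ))) / (1 - Cφ / 4) := by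
        rw [hB, haWA]
      rw [hB2]
      field_simp [hN0.ne', hd0.ne', h4.ne', h14.ne']
      ring
    set z : ℝ := (1 / (d : ℝ)) * ∑ ℓ, φ (A k ℓ) * X t ℓ
          + (1 / (N : ℝ)) * ∑ ℓ, φ (W k ℓ) * S t ℓ with hz
    set F1 : ℝ := (if k = n then (1:ℝ) else 0) / (N:ℝ) * deriv φ (W n m) * S t m
            + (1 / (N:ℝ)) * ∑ ℓ, φ (W k ℓ) * tSW t ℓ with hF1d
    set F2 : ℝ := (if i = k then (1:ℝ) else 0) / (d:ℝ) * deriv φ (A i j) * X t j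
            + (1 / (N:ℝ)) * ∑ ℓ, φ (W k ℓ) * tSA t ℓ with hF2d
    set F3 : ℝ := (if k = n then (1:ℝ) else 0) / (N:ℝ) * deriv φ (W n m) * tSA t m
            + (1 / (N:ℝ)) * ∑ ℓ, φ (W k ℓ) * tt t ℓ with hF3d
    have t1 : |deriv (deriv sigmoid) z| * |F1| * |F2|
        ≤ 1 / 10 * (Cφ' * Mφ / N) * (Cφ' * Mφ / d) :=
      mul_le_mul (mul_le_mul hσ'' hF1 (abs_nonneg _) (by norm_num)) hF2 (abs_nonneg _)
        (by positivity)
    have t2 : |deriv sigmoid z| * |F3|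
        ≤ 1 / 4 * (Cφ' * (Cφ' / ((4 - Cφ) * d)) / N + Cφ * B) :=
      mul_le_mul hσ' hF3 (abs_nonneg _) (by norm_num)
    calc |deriv (deriv sigmoid) z * F1 * F2 + deriv sigmoid z * F3|
        ≤ |deriv (deriv sigmoid) z * F1 * F2| + |deriv sigmoid z * F3| := abs_add_le _ _
      _ = |deriv (deriv sigmoid) z| * |F1| * |F2| + |deriv sigmoid z| * |F3| := by
          rw [abs_mul, abs_mul, abs_mul]
      _ ≤ 1 / 10 * (Cφ' * Mφ / N) * (Cφ' * Mφ / d)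
          + 1 / 4 * (Cφ' * (Cφ' / ((4 - Cφ) * d)) / N + Cφ * B) := add_le_add t1 t2
      _ = B := key
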